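/- arXiv:2203.06423 — 2 statements merged into one kernel-verified Lean document; each statement's English description precedes it below -/
import Mathlib

section
/- Let G be a ((K1 ∪ K2) + Kp)-free graph with ω(G) ≥ p+2, p ≥ 1, and let A = {v1,...,vω} be a maximum clique. Then there is no vertex x outside A such that x is nonadjacent to both v_i and v_j for some i < j with j ≥ p+2, and x is adjacent to all of v1,...,v_{j-1} except v_i. Equivalently, in the Wagon partition, C_{i,j} = ∅ for all j ≥ p+2. -/
open SimpleGraph

/-- The join of two graphs: all cross edges present. -/
def joinG {α β : Type*} (G : SimpleGraph α) (H : SimpleGraph β) : SimpleGraph (α ⊕ β) :=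
  SimpleGraph.fromRel (fun x y => match x, y with
    | Sum.inl a, Sum.inl b => G.Adj a b
    | Sum.inr a, Sum.inr b => H.Adj a b
    | Sum.inl _, Sum.inr _ => True
    | _, _ => False)

/-- The graph `P₃ ∪ P₂`: disjoint union of a path on 3 vertices and an edge. -/
def P3P2 : SimpleGraph (Fin 3 ⊕ Fin 2) := pathGraph 3 ⊕g pathGraph 2

/-- The graph `K₁ ∪ K₂`: disjoint union of a vertex and an edge. -/
def K1K2 : SimpleGraph (Fin 1 ⊕ Fin 2) := (⊥ : SimpleGraph (Fin 1)) ⊕g (⊤ : SimpleGraph (Fin 2))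

/-- The graph `(K₁ ∪ K₂) + Kₚ`: join of `K₁ ∪ K₂` with a complete graph on `p` vertices. -/
def K1K2Kp (p : ℕ) : SimpleGraph ((Fin 1 ⊕ Fin 2) ⊕ Fin p) := joinG K1K2 (⊤ : SimpleGraph (Fin p))

/-- The graph `2K₁ + Kₚ`: join of two isolated vertices with a complete graph on `p` vertices. -/
def twoK1Kp (p : ℕ) : SimpleGraph (Fin 2 ⊕ Fin p) :=
  joinG (⊥ : SimpleGraph (Fin 2)) (⊤ : SimpleGraph (Fin p))

/-- The HVN graph: `(K₁ ∪ K₂) + K₂`. -/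
def HVN : SimpleGraph ((Fin 1 ⊕ Fin 2) ⊕ Fin 2) := K1K2Kp 2

/-- The diamond: `2K₁ + K₂`, i.e. `K₄` minus an edge. -/
def diamond : SimpleGraph (Fin 2 ⊕ Fin 2) := twoK1Kp 2

/-- The paw: `(K₁ ∪ K₂) + K₁`. -/
def paw : SimpleGraph ((Fin 1 ⊕ Fin 2) ⊕ Fin 1) := K1K2Kp 1

/-- `G` is `H`-free if it has no induced subgraph isomorphic to `H`,
i.e. there is no graph embedding of `H` into `G`. -/
def Free {α β : Type*} (H : SimpleGraph α) (G : SimpleGraph β) : Prop :=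
  ¬ Nonempty (H ↪g G)

/-!
The vertex `x`, the edge `v i v j` and any `p` vertices `v k` with `k < j`, `k ≠ i` induce
`(K₁ ∪ K₂) + Kₚ`: `x` misses `v i` and `v j` but sees every such `v k`, and all the `v`'s
form a clique. Since `j ≥ p + 1`, there are `j - 1 ≥ p` such indices `k`.
-/

section JoinAdj

variable {α β : Type*} {G : SimpleGraph α} {H : SimpleGraph β}

@[simp]
theorem joinG_adj_inl_inl {a b : α} : (joinG G H).Adj (.inl a) (.inl b) ↔ G.Adj a b := by
  simp only [joinG, fromRel_adj, ne_eq, Sum.inl.injEq]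
  exact ⟨fun h => h.2.elim id Adj.symm, fun h => ⟨h.ne, .inl h⟩⟩

@[simp]
theorem joinG_adj_inr_inr {a b : β} : (joinG G H).Adj (.inr a) (.inr b) ↔ H.Adj a b := by
  simp only [joinG, fromRel_adj, ne_eq, Sum.inr.injEq]
  exact ⟨fun h => h.2.elim id Adj.symm, fun h => ⟨h.ne, .inl h⟩⟩

@[simp]
theorem joinG_adj_inl_inr {a : α} {b : β} : (joinG G H).Adj (.inl a) (.inr b) := by
  simp [joinG]

@[simp]
theorem joinG_adj_inr_inl {a : β} {b : α} : (joinG G H).Adj (.inr a) (.inl b) :=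
  joinG_adj_inl_inr.symm

end JoinAdj

namespace SimpleGraph.Embedding

variable {α β V : Type*} {G : SimpleGraph V} {H₁ : SimpleGraph α} {H₂ : SimpleGraph β}

def joinElim (f : H₁ ↪g G) (g : H₂ ↪g G) (hfg : ∀ a b, G.Adj (f a) (g b)) :
    joinG H₁ H₂ ↪g G where
  toFun := Sum.elim f g
  inj' := by
    rintro (a | a) (b | b) h
    · exact congrArg _ (f.injective h)
    · exact absurd h (hfg a b).ne
    · exact absurd h.symm (hfg b a).ne
    · exact congrArg _ (g.injective h)
  map_rel_iff' := by
    rintro (a | a) (b | b)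
    · exact f.map_adj_iff.trans joinG_adj_inl_inl.symm
    · exact iff_of_true (hfg a b) joinG_adj_inl_inr
    · exact iff_of_true (hfg b a).symm joinG_adj_inr_inl
    · exact g.map_adj_iff.trans joinG_adj_inr_inr.symm

def sumElim (f : H₁ ↪g G) (g : H₂ ↪g G)
    (hfg : ∀ a b, f a ≠ g b ∧ ¬ G.Adj (f a) (g b)) : H₁ ⊕g H₂ ↪g G where
  toFun := Sum.elim f g
  inj' := by
    rintro (a | a) (b | b) h
    · exact congrArg _ (f.injective h)
    · exact absurd h (hfg a b).1
    · exact absurd h.symm (hfg b a).1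
    · exact congrArg _ (g.injective h)
  map_rel_iff' := by
    rintro (a | a) (b | b)
    · exact f.map_adj_iff.trans sum_adj_inl.symm
    · exact iff_of_false (hfg a b).2 (not_adj_sum_inl_inr a b)
    · exact iff_of_false (fun h => (hfg b a).2 h.symm) fun h => not_adj_sum_inl_inr b a h.symm
    · exact g.map_adj_iff.trans sum_adj_inr.symm

def botOfSubsingleton [Subsingleton α] (x : V) : (⊥ : SimpleGraph α) ↪g G where
  toFun _ := x
  inj' a b _ := Subsingleton.elim a b
  map_rel_iff' := by simp

def topOfIsClique {c : α → V} (hc : Function.Injective c) (hclique : G.IsClique (Set.range c)) :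
    (⊤ : SimpleGraph α) ↪g G where
  toFun := c
  inj' := hc
  map_rel_iff' {a b} :=
    ⟨fun h => hc.ne_iff.1 h.ne, fun h => hclique ⟨a, rfl⟩ ⟨b, rfl⟩ (hc.ne h)⟩

def topOfAdj {a b : V} (hab : G.Adj a b) : (⊤ : SimpleGraph (Fin 2)) ↪g G :=
  topOfIsClique (c := ![a, b])
    (fun s t => by fin_cases s <;> fin_cases t <;> simp [hab.ne, hab.ne'])
    (by simpa [Matrix.range_cons, Matrix.range_empty] using isClique_pair.2 fun _ => hab.symm)

end SimpleGraph.Embedding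

open SimpleGraph.Embedding

section Embeddings

variable {V : Type*} {G : SimpleGraph V} {x a b : V}

/-- `x ≠ a` and `x ≠ b` need not be assumed: `x` misses both ends of the edge `ab`. -/
def embeddingK1K2 (hab : G.Adj a b) (hxa : ¬ G.Adj x a) (hxb : ¬ G.Adj x b) : K1K2 ↪g G :=
  sumElim (botOfSubsingleton x) (topOfAdj hab) fun _ t => by
    fin_cases t
    · exact ⟨fun (h : x = a) => hxb (h ▸ hab), hxa⟩
    · exact ⟨fun (h : x = b) => hxa (h ▸ hab.symm), hxb⟩

def embeddingK1K2Kp {p : ℕ} {c : Fin p → V} (hab : G.Adj a b) (hxa : ¬ G.Adj x a)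
    (hxb : ¬ G.Adj x b) (hc : Function.Injective c) (hclique : G.IsClique (Set.range c))
    (hx : ∀ t, G.Adj x (c t)) (ha : ∀ t, G.Adj a (c t)) (hb : ∀ t, G.Adj b (c t)) :
    K1K2Kp p ↪g G :=
  joinElim (embeddingK1K2 hab hxa hxb) (topOfIsClique hc hclique) fun u t => by
    rcases u with u | u
    · exact hx t
    · fin_cases u
      · exact ha t
      · exact hb t

end Embeddings

theorem stmt_2_general {V : Type*} (G : SimpleGraph V) (p : ℕ)
    (hfree : _root_.Free (K1K2Kp p) G)
    (v : Fin G.cliqueNum → V) (hinj : Function.Injective v)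
    (hclique : G.IsClique (Set.range v))
    (i j : Fin G.cliqueNum) (hij : i < j) (hj : p + 2 ≤ (j : ℕ) + 1)
    (x : V)
    (hxi : ¬ G.Adj x (v i)) (hxj : ¬ G.Adj x (v j))
    (hadj : ∀ k, k < j → k ≠ i → G.Adj x (v k)) : False := by
  have hvv : ∀ k l, k ≠ l → G.Adj (v k) (v l) := fun k l h =>
    hclique ⟨k, rfl⟩ ⟨l, rfl⟩ (hinj.ne h)
  -- the `Kₚ` consists of the first `p` vertices `v k` with `k < j`, `k ≠ i`
  set S := (Finset.Iio j).erase i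
  have hS : p ≤ S.card := by
    rw [Finset.card_erase_of_mem (Finset.mem_Iio.2 hij), Fin.card_Iio]
    omega
  set k : Fin p → Fin G.cliqueNum := fun t => S.orderEmbOfFin rfl (Fin.castLE hS t)
  have hk : ∀ t, k t ≠ i ∧ k t < j := fun t =>
    (Finset.mem_erase.1 (S.orderEmbOfFin_mem rfl (Fin.castLE hS t))).imp_right Finset.mem_Iio.1
  have hkinj : Function.Injective k :=
    (S.orderEmbOfFin rfl).injective.comp (Fin.castLE_injective hS)
  refine hfree ⟨embeddingK1K2Kp (c := v ∘ k) (hvv i j hij.ne) hxi hxj (hinj.comp hkinj)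
    (hclique.subset (Set.range_comp_subset_range k v)) (fun t => hadj _ (hk t).2 (hk t).1)
    (fun t => hvv _ _ (hk t).1.symm) (fun t => hvv _ _ (hk t).2.ne')⟩

theorem stmt_2 {V : Type*} [Fintype V] (G : SimpleGraph V) (p : ℕ) (hp : 1 ≤ p)
    (hfree : _root_.Free (K1K2Kp p) G) (hω : p + 2 ≤ G.cliqueNum)
    (v : Fin G.cliqueNum → V) (hinj : Function.Injective v)
    (hclique : G.IsClique (Set.range v))
    (i j : Fin G.cliqueNum) (hij : i < j) (hj : p + 2 ≤ (j : ℕ) + 1)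
    (x : V) (hxA : x ∉ Set.range v)
    (hxi : ¬ G.Adj x (v i)) (hxj : ¬ G.Adj x (v j))
    (hadj : ∀ k, k < j → k ≠ i → G.Adj x (v k)) : False :=
  stmt_2_general G p hfree v hinj hclique i j hij hj x hxi hxj hadj
end

section
/- Let G be a {P3 ∪ P2, 2K1 + Kp}-free graph with p ≥ 2, with maximum clique A = {v1,...,vω}, and suppose the set C_{1,2} of vertices nonadjacent to both v1 and v2 contains a clique S of size at least 2p. If 2p ≤ ω(G) ≤ 3p−2, then every vertex outside A ∪ C_{1,2} that is nonadjacent to at least two vertices of A is adjacent to every vertex of S. -/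
/-!
Suppose `a` misses some `s ∈ S`. In a `2K₁ + Kₚ`-free graph two distinct nonadjacent vertices
have fewer than `p` common neighbours in any clique, so `a` has fewer than `p` neighbours in `A`
and in `S`. If every non-neighbour of `a` in `A` were complete to `S`, these non-neighbours
(at least `ω - p + 1` of them) together with `S` (at least `2p`) would form a clique larger than
`ω`. Hence some non-neighbour `u ∈ A` of `a` misses a vertex of `S`, so `u` also has fewer than
`p` neighbours in `S`, and as `|S| ≥ 2p` some edge `tt'` of `S` avoids both `a` and `u`. With
`v ∈ {v₁, v₂}` adjacent to `a`, the path `u v a` and the edge `tt'` induce a `P₃ ∪ P₂`.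
-/

open SimpleGraph

section

variable {V : Type*} {G : SimpleGraph V}

lemma nonempty_P3P2_embedding {u v w t t' : V} (huv : G.Adj u v) (hvw : G.Adj v w)
    (huw : ¬ G.Adj u w) (hne : u ≠ w) (htt' : G.Adj t t')
    (hnt : ∀ x ∈ ({u, v, w} : Set V), ¬ G.Adj x t ∧ ¬ G.Adj x t') :
    Nonempty (P3P2 ↪g G) := by
  simp only [Set.mem_insert_iff, Set.mem_singleton_iff, forall_eq_or_imp, forall_eq] at hnt
  have hf : Function.Injective (Sum.elim ![u, v, w] ![t, t']) := by
    rintro (i | i) (j | j) h <;> fin_cases i <;> fin_cases j <;> simp_all [G.adj_comm]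
  refine ⟨⟨⟨_, hf⟩, ?_⟩⟩
  rintro (i | i) (j | j) <;> fin_cases i <;> fin_cases j <;>
    simp_all [P3P2, pathGraph_adj, G.adj_comm]

lemma SimpleGraph.IsClique.ncard_le_cliqueNum [Finite V] {s : Set V} (hs : G.IsClique s) :
    s.ncard ≤ G.cliqueNum := by
  obtain ⟨t, rfl⟩ := s.toFinite.exists_finset_coe
  rw [Set.ncard_coe_finset]
  exact IsClique.card_le_cliqueNum (tc := hs)

section twoK1Kp

variable {p : ℕ}

@[simp]
lemma twoK1Kp_adj_inl_inl (i j : Fin 2) : ¬ (twoK1Kp p).Adj (.inl i) (.inl j) := by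
  simp [twoK1Kp, joinG]

@[simp]
lemma twoK1Kp_adj_inl_inr (i : Fin 2) (j : Fin p) : (twoK1Kp p).Adj (.inl i) (.inr j) := by
  simp [twoK1Kp, joinG]

@[simp]
lemma twoK1Kp_adj_inr_inr (i j : Fin p) : (twoK1Kp p).Adj (.inr i) (.inr j) ↔ i ≠ j := by
  simp [twoK1Kp, joinG, eq_comm]

lemma nonempty_twoK1Kp_embedding {a b : V} (hab : a ≠ b) (hnadj : ¬ G.Adj a b)
    (k : Fin p ↪ V) (hk : G.IsClique (Set.range k))
    (hak : ∀ i, G.Adj a (k i)) (hbk : ∀ i, G.Adj b (k i)) :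
    Nonempty (twoK1Kp p ↪g G) := by
  have hf : Function.Injective (Sum.elim ![a, b] k) := by
    rintro (i | i) (j | j) h
    · fin_cases i <;> fin_cases j <;> simp_all [eq_comm]
    · fin_cases i
      exacts [((hak j).ne h).elim, ((hbk j).ne h).elim]
    · fin_cases j
      exacts [((hak i).ne h.symm).elim, ((hbk i).ne h.symm).elim]
    · exact congrArg _ (k.injective h)
  refine ⟨⟨⟨_, hf⟩, ?_⟩⟩
  rintro (i | i) (j | j) <;> simp only [Function.Embedding.coeFn_mk, Sum.elim_inl, Sum.elim_inr]
  · fin_cases i <;> fin_cases j <;> simp [hnadj, G.adj_comm]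
  · fin_cases i <;> simp [hak, hbk]
  · rw [(twoK1Kp p).adj_comm]
    fin_cases j <;> simp [G.adj_comm, hak, hbk]
  · rw [twoK1Kp_adj_inr_inr]
    exact ⟨fun h hij => G.ne_of_adj h (congrArg k hij),
      fun hij => hk (Set.mem_range_self i) (Set.mem_range_self j) (k.injective.ne hij)⟩

lemma Free.ncard_lt_of_isClique_subset_commonNeighbors [Finite V]
    (hf : _root_.Free (twoK1Kp p) G) {a b : V} (hab : a ≠ b) (hnadj : ¬ G.Adj a b)
    {K : Set V} (hK : G.IsClique K) (hKab : K ⊆ G.commonNeighbors a b) : K.ncard < p := by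
  by_contra! hpK
  have := Fintype.ofFinite K
  obtain ⟨e⟩ : Nonempty (Fin p ↪ K) := Function.Embedding.nonempty_of_card_le <| by
    rwa [Fintype.card_fin, ← Nat.card_eq_fintype_card, Nat.card_coe_set_eq]
  let k := e.trans (Function.Embedding.subtype _)
  have hkK : ∀ i, k i ∈ K := fun i => (e i).2
  refine hf (nonempty_twoK1Kp_embedding hab hnadj k (hK.subset ?_)
    (fun i => (hKab (hkK i)).1) (fun i => (hKab (hkK i)).2))
  rintro _ ⟨i, rfl⟩
  exact hkK i

lemma Free.ncard_inter_neighborSet_lt [Finite V] (hf : _root_.Free (twoK1Kp p) G)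
    {C : Set V} (hC : G.IsClique C) {a b : V} (hb : b ∈ C) (ha : a ∉ C) (hab : ¬ G.Adj a b) :
    (C ∩ G.neighborSet a).ncard < p := by
  refine hf.ncard_lt_of_isClique_subset_commonNeighbors (ne_of_mem_of_not_mem hb ha).symm hab
    (hC.subset Set.inter_subset_left) fun x ⟨hxC, hax⟩ => ⟨hax, hC hb hxC ?_⟩
  rintro rfl
  exact hab hax

end twoK1Kp

lemma Set.ncard_le_ncard_inter_add_ncard_inter_add_ncard_sdiff {α : Type*} [Finite α]
    (s t u : Set α) : s.ncard ≤ (s ∩ t).ncard + (s ∩ u).ncard + (s \ (t ∪ u)).ncard := by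
  rw [← Set.ncard_inter_add_ncard_sdiff_eq_ncard s (t ∪ u), Set.inter_union_distrib_left]
  exact Nat.add_le_add_right (Set.ncard_union_le _ _) _

lemma SimpleGraph.IsClique.exists_not_adj_of_ncard_inter_neighborSet_lt [Finite V] {A S : Set V}
    (hA : G.IsClique A) (hAmax : G.cliqueNum ≤ A.ncard) (hS : G.IsClique S) (hSA : Disjoint S A)
    {a : V} (ha : (A ∩ G.neighborSet a).ncard < S.ncard) :
    ∃ u ∈ A, ¬ G.Adj a u ∧ ∃ z ∈ S, ¬ G.Adj u z := by
  by_contra! hcomplete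
  have hclique : G.IsClique (A \ G.neighborSet a ∪ S) := by
    rintro x (⟨hxA, hax⟩ | hxS) y (⟨hyA, hay⟩ | hyS) hxy
    exacts [hA hxA hyA hxy, hcomplete x hxA hax y hyS, (hcomplete y hyA hay x hxS).symm,
      hS hxS hyS hxy]
  have := hclique.ncard_le_cliqueNum
  rw [Set.ncard_union_eq (hSA.symm.mono_left Set.sdiff_subset)] at this
  have := Set.ncard_inter_add_ncard_sdiff_eq_ncard A (G.neighborSet a)
  omega

end

theorem stmt_16_general {V : Type*} [Fintype V] (G : SimpleGraph V) (p : ℕ)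
    (hf1 : _root_.Free P3P2 G) (hf2 : _root_.Free (twoK1Kp p) G)
    (A : Set V) (hA : G.IsClique A) (hAmax : A.ncard = G.cliqueNum)
    (v1 v2 : V) (hv1 : v1 ∈ A) (hv2 : v2 ∈ A)
    (S : Set V) (hSC : ∀ x ∈ S, x ∉ A ∧ ¬ G.Adj x v1 ∧ ¬ G.Adj x v2)
    (hS : G.IsClique S) (hScard : 2 * p ≤ S.ncard)
    (a : V) (haA : a ∉ A) (haC : G.Adj a v1 ∨ G.Adj a v2)
    (ha2 : ∃ u ∈ A, ∃ w ∈ A, u ≠ w ∧ ¬ G.Adj a u ∧ ¬ G.Adj a w) :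
    ∀ s ∈ S, G.Adj a s := by
  intro s hs
  by_contra has
  obtain ⟨v, hvA, hav, hSv⟩ : ∃ v ∈ A, G.Adj a v ∧ ∀ x ∈ S, ¬ G.Adj x v := by
    rcases haC with h | h
    exacts [⟨v1, hv1, h, fun x hx => (hSC x hx).2.1⟩, ⟨v2, hv2, h, fun x hx => (hSC x hx).2.2⟩]
  have hSA : Disjoint S A := Set.disjoint_left.mpr fun x hx => (hSC x hx).1
  obtain ⟨u0, hu0A, -, -, -, hau0, -⟩ := ha2
  have hNA := hf2.ncard_inter_neighborSet_lt hA hu0A haA hau0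
  have hNS := hf2.ncard_inter_neighborSet_lt hS hs (fun h => hSv a h hav) has
  obtain ⟨u, huA, hau, z, hzS, huz⟩ :=
    hA.exists_not_adj_of_ncard_inter_neighborSet_lt hAmax.ge hS hSA (a := a) (by omega)
  have hNu := hf2.ncard_inter_neighborSet_lt hS hzS (hSA.notMem_of_mem_right huA) huz
  have hW : 1 < (S \ (G.neighborSet a ∪ G.neighborSet u)).ncard := by
    have := Set.ncard_le_ncard_inter_add_ncard_inter_add_ncard_sdiff S (G.neighborSet a)
      (G.neighborSet u)
    omega
  obtain ⟨t, ⟨htS, htN⟩, t', ⟨ht'S, ht'N⟩, htt'⟩ := (Set.one_lt_ncard (Set.toFinite _)).mp hW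
  simp only [Set.mem_union, mem_neighborSet, not_or] at htN ht'N
  refine hf1 (nonempty_P3P2_embedding (hA huA hvA fun h => hau (h ▸ hav)) hav.symm
    (mt Adj.symm hau) (ne_of_mem_of_not_mem huA haA) (hS htS ht'S htt') ?_)
  simp only [Set.mem_insert_iff, Set.mem_singleton_iff]
  rintro x (rfl | rfl | rfl)
  exacts [⟨htN.2, ht'N.2⟩, ⟨mt Adj.symm (hSv t htS), mt Adj.symm (hSv t' ht'S)⟩, ⟨htN.1, ht'N.1⟩]

theorem stmt_16 {V : Type*} [Fintype V] (G : SimpleGraph V) (p : ℕ) (hp : 2 ≤ p)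
    (hf1 : _root_.Free P3P2 G) (hf2 : _root_.Free (twoK1Kp p) G)
    (A : Set V) (hA : G.IsClique A) (hAmax : A.ncard = G.cliqueNum)
    (v1 v2 : V) (hv1 : v1 ∈ A) (hv2 : v2 ∈ A) (hne : v1 ≠ v2)
    (S : Set V) (hSC : ∀ x ∈ S, x ∉ A ∧ ¬ G.Adj x v1 ∧ ¬ G.Adj x v2)
    (hS : G.IsClique S) (hScard : 2 * p ≤ S.ncard)
    (hω1 : 2 * p ≤ G.cliqueNum) (hω2 : G.cliqueNum ≤ 3 * p - 2)
    (a : V) (haA : a ∉ A) (haC : G.Adj a v1 ∨ G.Adj a v2)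
    (ha2 : ∃ u ∈ A, ∃ w ∈ A, u ≠ w ∧ ¬ G.Adj a u ∧ ¬ G.Adj a w) :
    ∀ s ∈ S, G.Adj a s :=
  stmt_16_general G p hf1 hf2 A hA hAmax v1 v2 hv1 hv2 S hSC hS hScard a haA haC ha2
end
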